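/- arXiv:1706.09178 — 6 statements merged into one kernel-verified Lean document; each statement's English description precedes it below -/
import Mathlib

section
/- Let D ≥ 2 be squarefree, K = ℚ(√D), and ω_D the standard generator of the ring of integers (ω_D = √D if D ≡ 2,3 mod 4, ω_D = (1+√D)/2 if D ≡ 1 mod 4). If σ_D = ω_D + ⌊-ω_D'⌋ has purely periodic continued fraction [u_0; u_1, …, u_{s-1}] (with period s), then u_0 = u_s is even if and only if D ≡ 2 or 3 mod 4. -/
open Real Filter

noncomputable def omg (D : ℕ) : ℝ := if D % 4 = 1 then (1 + Real.sqrt D) / 2 else Real.sqrt D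

noncomputable def omgc (D : ℕ) : ℝ := if D % 4 = 1 then (1 - Real.sqrt D) / 2 else -Real.sqrt D

noncomputable def sigmaD (D : ℕ) : ℝ := omg D + (⌊-omgc D⌋ : ℤ)

noncomputable def gam (D : ℕ) : ℕ → ℝ
  | 0 => sigmaD D
  | n + 1 => 1 / (gam D n - ⌊gam D n⌋)

/-- partial quotients of the continued fraction of σ_D -/
noncomputable def uD (D : ℕ) (n : ℕ) : ℤ := ⌊gam D n⌋

lemma u0_val (D : ℕ) : uD D 0 = ⌊omg D⌋ + ⌊-omgc D⌋ := by
  simp [uD, gam, sigmaD, Int.floor_add_intCast]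

theorem stmt0 (D : ℕ) (s : ℕ)
    (hD2 : 2 ≤ D) (hsq : Squarefree D)
    (hs : 1 ≤ s)
    (hper : ∀ n : ℕ, gam D (n + s) = gam D n) :
    uD D s = uD D 0 ∧ (Even (uD D 0) ↔ (D % 4 = 2 ∨ D % 4 = 3)) := by
  constructor
  · have := hper 0
    simp only [Nat.zero_add] at this
    simp [uD, this]
  · have h4 : D % 4 ≠ 0 := by
      intro h
      have : (2 : ℕ) * 2 ∣ D := by omega
      exact absurd (hsq 2 this) (by decide)
    by_cases h1 : D % 4 = 1
    · -- u0 odd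
      have homgc : -omgc D = omg D - 1 := by
        simp only [omg, omgc, h1, if_true]
        ring
      have : uD D 0 = 2 * ⌊omg D⌋ - 1 := by
        rw [u0_val, homgc]
        have : omg D - 1 = omg D + (-1 : ℤ) := by push_cast; ring
        rw [this, Int.floor_add_intCast]; ring
      rw [this]
      constructor
      · intro h; exact absurd h (by simp [Int.even_sub, parity_simps])
      · intro h; omega
    · -- u0 even
      have : uD D 0 = 2 * ⌊Real.sqrt D⌋ := by
        rw [u0_val]
        simp only [omg, omgc, h1, if_false, neg_neg]
        ring
      rw [this]
      constructor
      · intro _; omega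
      · intro _; exact even_two_mul _
end

section
/- Let p_i/q_i be the convergents to ω_D and α_i = p_i - q_i ω_D', where ω_D' is the Galois conjugate of ω_D. Then α_i is totally positive if and only if i ≥ -1 is odd. -/
open Real Filter

/-! The complete quotients `γ` of `σ_D = ω_D + ⌊-ω_D'⌋` agree with those of `ω_D` from `γ 1` on,
so the convergent recurrence gives `γ (i + 2) = -ε_i / ε_(i+1)` for `ε_i = p_i - q_i ω_D`.
As every `γ (i + 2) > 1`, consecutive `ε_i` have opposite signs, and `ε_(-1) = 1`; hence
`ε_i > 0` iff `i` is odd. Finally `α_i ≥ ε_i` because `q_i ≥ 0` and `ω_D' < ω_D`. -/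

section CompleteQuotients

variable {γ : ℕ → ℝ}

theorem irrational_of_fract_inv_step (hγ : ∀ n, γ (n + 1) = (Int.fract (γ n))⁻¹)
    (h0 : Irrational (γ 0)) (n : ℕ) : Irrational (γ n) := by
  induction n with
  | zero => exact h0
  | succ n ih => rw [hγ, Int.fract]; exact (ih.sub_intCast _).inv

theorem one_lt_of_fract_inv_step (hγ : ∀ n, γ (n + 1) = (Int.fract (γ n))⁻¹)
    (h0 : Irrational (γ 0)) (n : ℕ) : 1 < γ (n + 1) := by
  have hfract : 0 < Int.fract (γ n) :=
    Int.fract_pos.mpr fun h => (irrational_of_fract_inv_step hγ h0 n).ne_int _ h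
  rw [hγ]
  exact one_lt_inv_iff₀.mpr ⟨hfract, Int.fract_lt_one _⟩

theorem eq_neg_div_of_fract_inv_step {E : ℕ → ℝ} (hγ : ∀ n, γ (n + 1) = (Int.fract (γ n))⁻¹)
    (hpos : ∀ n, 0 < γ (n + 1)) (hE : ∀ n, E (n + 2) = ⌊γ (n + 1)⌋ * E (n + 1) + E n)
    (h1 : γ 1 = -E 0 / E 1) (n : ℕ) : γ (n + 1) = -E n / E (n + 1) := by
  induction n with
  | zero => exact h1
  | succ n ih =>
    have hne : E (n + 1) ≠ 0 := fun h => by simpa [ih, h] using hpos n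
    have hfract : Int.fract (γ (n + 1)) = -E (n + 2) / E (n + 1) := by
      rw [Int.fract, hE n]
      generalize ⌊γ (n + 1)⌋ = u
      rw [ih]
      field_simp
      ring
    rw [hγ, hfract, inv_div, div_neg, neg_div]

end CompleteQuotients

theorem neg_one_pow_mul_pos_of_neg_div_pos {E : ℕ → ℝ} (h : ∀ n, 0 < -E n / E (n + 1))
    (h0 : 0 < E 0) (n : ℕ) : 0 < (-1) ^ n * E n := by
  induction n with
  | zero => simpa using h0
  | succ n ih =>
    have hne : ((-1 : ℝ) ^ n) ≠ 0 := pow_ne_zero _ (by norm_num)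
    have hratio : (-1) ^ n * E n / ((-1) ^ (n + 1) * E (n + 1)) = -E n / E (n + 1) := by
      rw [pow_succ, mul_assoc, mul_div_mul_left _ _ hne, neg_one_mul, div_neg, neg_div]
    exact (div_pos_iff_of_pos_left ih).mp (hratio ▸ h n)

theorem nonneg_of_two_step_recurrence {Q c : ℕ → ℤ} (hc : ∀ n, 0 ≤ c n) (h0 : 0 ≤ Q 0)
    (h1 : 0 ≤ Q 1) (hQ : ∀ n, Q (n + 2) = c n * Q (n + 1) + Q n) (n : ℕ) : 0 ≤ Q n := by
  induction n using Nat.twoStepInduction with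
  | zero => exact h0
  | one => exact h1
  | more n ih0 ih1 => rw [hQ]; have := hc n; positivity

theorem pos_and_pos_iff_even {a b : ℝ} {k : ℕ} (hab : a ≤ b) (h : 0 < (-1) ^ k * a) :
    0 < b ∧ 0 < a ↔ Even k := by
  rcases Nat.even_or_odd k with hk | hk
  · rw [hk.neg_one_pow, one_mul] at h
    exact iff_of_true ⟨h.trans_le hab, h⟩ hk
  · rw [hk.neg_one_pow, neg_one_mul, neg_pos] at h
    exact iff_of_false (fun hpos => h.not_gt hpos.2) (Nat.not_even_iff_odd.mpr hk)

theorem shifted_recurrence {f : ℤ → ℤ} {u : ℕ → ℤ}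
    (h : ∀ i : ℤ, -1 ≤ i → f (i + 2) = u (i + 2).toNat * f (i + 1) + f i) (n : ℕ) :
    f ((n + 2 : ℕ) - 1) = u (n + 1) * f ((n + 1 : ℕ) - 1) + f (n - 1) := by
  have := h (n - 1) (by omega)
  rw [show (n : ℤ) - 1 + 2 = ((n + 2 : ℕ) : ℤ) - 1 by push_cast; ring,
    show (n : ℤ) - 1 + 1 = ((n + 1 : ℕ) : ℤ) - 1 by push_cast; ring] at this
  rwa [show (((n + 2 : ℕ) : ℤ) - 1).toNat = n + 1 by omega] at this

theorem irrational_omg {D : ℕ} (hD2 : 2 ≤ D) (hsq : Squarefree D) : Irrational (omg D) := by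
  have hs : Irrational √D := by
    rw [irrational_sqrt_natCast_iff]
    rintro ⟨r, rfl⟩
    have := Nat.isUnit_iff.mp (hsq r dvd_rfl)
    subst this
    omega
  unfold omg
  split_ifs
  · simpa using (hs.natCast_add 1).div_natCast (two_ne_zero : (2 : ℕ) ≠ 0)
  · exact hs

theorem omgc_lt_omg {D : ℕ} (hD : 0 < D) : omgc D < omg D := by
  have : 0 < √(D : ℝ) := Real.sqrt_pos.mpr (by exact_mod_cast hD)
  unfold omg omgc
  split_ifs <;> linarith

theorem sub_mul_omg_le_sub_mul_omgc {D : ℕ} (hD : 0 < D) (a : ℝ) {b : ℝ} (hb : 0 ≤ b) :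
    a - b * omg D ≤ a - b * omgc D := by
  have := mul_le_mul_of_nonneg_left (omgc_lt_omg hD).le hb
  linarith

theorem gam_succ (D n : ℕ) : gam D (n + 1) = (Int.fract (gam D n))⁻¹ := by
  rw [gam, one_div, Int.fract]

theorem gam_one (D : ℕ) : gam D 1 = (Int.fract (omg D))⁻¹ := by
  rw [gam_succ, gam, sigmaD, Int.fract_add_intCast]

theorem ceil_uD_zero_div_two (D : ℕ) : ⌈(uD D 0 : ℚ) / 2⌉ = ⌊omg D⌋ := by
  have htrace : -omgc D = omg D - (if D % 4 = 1 then 1 else 0 : ℤ) := by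
    unfold omg omgc
    split_ifs <;> push_cast <;> ring
  rw [uD, gam, sigmaD, Int.floor_add_intCast, htrace, Int.floor_sub_intCast]
  split_ifs
  · rw [show ((⌊omg D⌋ + (⌊omg D⌋ - 1) : ℤ) : ℚ) / 2 = -1 / 2 + ⌊omg D⌋ by push_cast; ring,
      Int.ceil_add_intCast]
    norm_num
  · rw [show ((⌊omg D⌋ + (⌊omg D⌋ - 0) : ℤ) : ℚ) / 2 = ⌊omg D⌋ by push_cast; ring,
      Int.ceil_intCast]

theorem stmt1 (D : ℕ)
    (hD2 : 2 ≤ D) (hsq : Squarefree D)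
    (p q : ℤ → ℤ)
    (hpm1 : p (-1) = 1) (hqm1 : q (-1) = 0)
    (hp0 : p 0 = ⌈(uD D 0 : ℚ) / 2⌉) (hq0 : q 0 = 1)
    (hprec : ∀ i : ℤ, -1 ≤ i → p (i + 2) = uD D (i + 2).toNat * p (i + 1) + p i)
    (hqrec : ∀ i : ℤ, -1 ≤ i → q (i + 2) = uD D (i + 2).toNat * q (i + 1) + q i)
 :
    ∀ i : ℤ, -1 ≤ i →
      ((0 < (p i : ℝ) - (q i : ℝ) * omgc D ∧ 0 < (p i : ℝ) - (q i : ℝ) * omg D) ↔ Odd i) := by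
  have hirr : Irrational (gam D 0) := (irrational_omg hD2 hsq).add_intCast _
  have hγpos n : 0 < gam D (n + 1) := one_pos.trans <| one_lt_of_fract_inv_step (gam_succ D) hirr n
  set E : ℕ → ℝ := fun n => p (n - 1) - q (n - 1) * omg D with hE
  have hErec n : E (n + 2) = ⌊gam D (n + 1)⌋ * E (n + 1) + E n := by
    simp only [hE, shifted_recurrence hprec, shifted_recurrence hqrec, uD]
    push_cast
    ring
  have hE0 : E 0 = 1 := by simp [hE, hpm1, hqm1]
  have hE1 : E 1 = -Int.fract (omg D) := by
    simp [hE, hp0, hq0, ceil_uD_zero_div_two, ← Int.self_sub_floor]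
  have hsign := neg_one_pow_mul_pos_of_neg_div_pos
    (fun n => eq_neg_div_of_fract_inv_step (gam_succ D) hγpos hErec
      (by rw [gam_one, hE0, hE1, neg_div_neg_eq, one_div]) n ▸ hγpos n)
    (hE0 ▸ one_pos)
  have hq (n : ℕ) : 0 ≤ q (n - 1) :=
    nonneg_of_two_step_recurrence (Q := fun n => q (n - 1))
      (fun n => Int.floor_nonneg.mpr (hγpos n).le) (by simp [hqm1]) (by simp [hq0])
      (shifted_recurrence hqrec) n
  intro i hi
  obtain ⟨k, rfl⟩ : ∃ k : ℕ, i = k - 1 := ⟨(i + 1).toNat, by omega⟩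
  rw [show Odd ((k : ℤ) - 1) ↔ Even k by simp [parity_simps]]
  exact pos_and_pos_iff_even (sub_mul_omg_le_sub_mul_omgc (by omega) _ (by exact_mod_cast hq k))
    (hsign k)
end

section
/- Let (β_j)_{j∈ℤ} be the increasing enumeration of all indecomposable totally positive integers in O_K, with β_0 = 1. Then β_j' = β_{-j} for all j ∈ ℤ, where ' denotes the Galois conjugate. -/
open Real Filter

noncomputable def emb1 (D : ℕ) (x : ℤ × ℤ) : ℝ := (x.1 : ℝ) + (x.2 : ℝ) * omg D

noncomputable def emb2 (D : ℕ) (x : ℤ × ℤ) : ℝ := (x.1 : ℝ) + (x.2 : ℝ) * omgc D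

def conjp (D : ℕ) (x : ℤ × ℤ) : ℤ × ℤ := if D % 4 = 1 then (x.1 + x.2, -x.2) else (x.1, -x.2)

def TotPos (D : ℕ) (x : ℤ × ℤ) : Prop := 0 < emb1 D x ∧ 0 < emb2 D x

def Indec (D : ℕ) (x : ℤ × ℤ) : Prop :=
  TotPos D x ∧ ¬ ∃ y z : ℤ × ℤ, TotPos D y ∧ TotPos D z ∧ x = y + z

noncomputable def Nm (D : ℕ) (x : ℤ × ℤ) : ℝ := emb1 D x * emb2 D x

noncomputable def disc (D : ℕ) : ℝ := if D % 4 = 1 then (D : ℝ) else 4 * (D : ℝ)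

def UniqDec (D : ℕ) (x : ℤ × ℤ) : Prop :=
  ∃! m : Multiset (ℤ × ℤ), (∀ y ∈ m, Indec D y) ∧ m.sum = x

lemma my_sqrt_irr {D : ℕ} (hD2 : 2 ≤ D) (hsq : Squarefree D) : Irrational (Real.sqrt D) := by
  rw [irrational_sqrt_natCast_iff]
  rintro ⟨r, rfl⟩
  have h1 := hsq r ⟨1, by ring⟩
  rw [Nat.isUnit_iff] at h1
  subst h1
  norm_num at hD2

lemma my_sqrt_ne {D : ℕ} (hD2 : 2 ≤ D) (hsq : Squarefree D) (a b : ℤ) (hb : b ≠ 0) :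
    Real.sqrt D * (b : ℝ) ≠ (a : ℝ) := by
  intro h
  apply my_sqrt_irr hD2 hsq
  refine ⟨(a : ℚ) / b, ?_⟩
  have hb' : (b : ℝ) ≠ 0 := Int.cast_ne_zero.mpr hb
  push_cast
  field_simp
  linarith [h]

lemma emb1_conjp (D : ℕ) (x : ℤ × ℤ) : emb1 D (conjp D x) = emb2 D x := by
  by_cases h : D % 4 = 1 <;> simp [emb1, emb2, conjp, omg, omgc, h] <;> push_cast <;> ring

lemma emb2_conjp (D : ℕ) (x : ℤ × ℤ) : emb2 D (conjp D x) = emb1 D x := by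
  by_cases h : D % 4 = 1 <;> simp [emb1, emb2, conjp, omg, omgc, h] <;> push_cast <;> ring

lemma conjp_conjp (D : ℕ) (x : ℤ × ℤ) : conjp D (conjp D x) = x := by
  by_cases h : D % 4 = 1 <;> simp [conjp, h]

lemma conjp_add (D : ℕ) (x y : ℤ × ℤ) : conjp D (x + y) = conjp D x + conjp D y := by
  by_cases h : D % 4 = 1 <;> simp [conjp, h, Prod.ext_iff] <;> ring_nf <;> simp [add_comm, add_assoc, add_left_comm]

lemma totPos_conjp (D : ℕ) (x : ℤ × ℤ) : TotPos D (conjp D x) ↔ TotPos D x := by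
  simp [TotPos, emb1_conjp, emb2_conjp, and_comm]

lemma indec_conjp {D : ℕ} {x : ℤ × ℤ} (h : Indec D x) : Indec D (conjp D x) := by
  refine ⟨(totPos_conjp D x).mpr h.1, ?_⟩
  rintro ⟨y, z, hy, hz, hxy⟩
  exact h.2 ⟨conjp D y, conjp D z, (totPos_conjp D y).mpr hy, (totPos_conjp D z).mpr hz,
    by rw [← conjp_conjp D x, hxy, conjp_add]⟩

lemma emb1_sub (D : ℕ) (x y : ℤ × ℤ) : emb1 D (y - x) = emb1 D y - emb1 D x := by
  simp [emb1, Prod.fst_sub, Prod.snd_sub]; push_cast; ring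

lemma emb2_sub (D : ℕ) (x y : ℤ × ℤ) : emb2 D (y - x) = emb2 D y - emb2 D x := by
  simp [emb2, Prod.fst_sub, Prod.snd_sub]; push_cast; ring

lemma emb2_eq_zero {D : ℕ} (hD2 : 2 ≤ D) (hsq : Squarefree D) {x : ℤ × ℤ}
    (h : emb2 D x = 0) : x = 0 := by
  by_cases hx2 : x.2 = 0
  · simp [emb2, hx2] at h
    exact Prod.ext (by exact_mod_cast h) hx2
  · exfalso
    by_cases h4 : D % 4 = 1
    · apply my_sqrt_ne hD2 hsq (2 * x.1 + x.2) x.2 hx2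
      simp [emb2, omgc, h4] at h
      push_cast
      linarith
    · apply my_sqrt_ne hD2 hsq x.1 x.2 hx2
      simp [emb2, omgc, h4] at h
      linarith

lemma emb2_inj {D : ℕ} (hD2 : 2 ≤ D) (hsq : Squarefree D) {x y : ℤ × ℤ}
    (h : emb2 D x = emb2 D y) : x = y := by
  have h0 := emb2_eq_zero hD2 hsq (x := y - x) (by rw [emb2_sub]; linarith)
  exact (sub_eq_zero.mp h0).symm

-- antitone lemma
lemma indec_anti {D : ℕ} (hD2 : 2 ≤ D) (hsq : Squarefree D) {x y : ℤ × ℤ}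
    (hx : Indec D x) (hy : Indec D y) (h : emb1 D x < emb1 D y) : emb2 D y < emb2 D x := by
  rcases lt_trichotomy (emb2 D y) (emb2 D x) with h' | h' | h'
  · exact h'
  · exfalso
    have h0 := emb2_eq_zero hD2 hsq (x := y - x) (by rw [emb2_sub]; linarith)
    have hyx : y = x := sub_eq_zero.mp h0
    rw [hyx] at h
    exact lt_irrefl _ h
  · exfalso
    apply hy.2
    refine ⟨x, y - x, hx.1, ⟨?_, ?_⟩, by abel⟩
    · rw [emb1_sub]; linarith
    · rw [emb2_sub]; linarith

lemma strictMono_int_le {g : ℤ → ℤ} (hg : StrictMono g) :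
    ∀ a b : ℤ, a ≤ b → g a + (b - a) ≤ g b := by
  intro a b hab
  have key : ∀ n : ℕ, g a + n ≤ g (a + n) := by
    intro n
    induction n with
    | zero => simp
    | succ n ih =>
      have h2 : g (a + n) < g (a + (n + 1 : ℕ)) := hg (by push_cast; omega)
      push_cast at *
      omega
  have h3 := key (b - a).toNat
  rw [show a + ((b - a).toNat : ℤ) = b by omega] at h3
  omega

lemma anti_inv_neg {f : ℤ → ℤ} (hf : StrictAnti f) (hinv : ∀ j, f (f j) = j)
    (h0 : f 0 = 0) : ∀ j, f j = -j := by
  have hg : StrictMono (fun j => -(f j)) := fun a b hab => by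
    simpa using neg_lt_neg (hf hab)
  have key : ∀ j : ℤ, 0 ≤ j → f j = -j := by
    intro j hj
    have h1 : -(f 0) + (j - 0) ≤ -(f j) := strictMono_int_le hg 0 j hj
    rw [h0] at h1
    have hfj : f j ≤ 0 := by omega
    have h2 : -(f (f j)) + (0 - f j) ≤ -(f 0) := strictMono_int_le hg (f j) 0 hfj
    rw [h0, hinv] at h2
    omega
  intro j
  rcases le_or_gt 0 j with hj | hj
  · exact key j hj
  · have hfn : f (-j) = -(-j) := key (-j) (by omega)
    have h2 := hinv (-j)
    rw [hfn] at h2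
    simpa using h2

lemma conjp_one (D : ℕ) : conjp D (1, 0) = (1, 0) := by
  by_cases h : D % 4 = 1 <;> simp [conjp, h]

theorem stmt6 (D : ℕ)
    (hD2 : 2 ≤ D) (hsq : Squarefree D)
    (β : ℤ → ℤ × ℤ)
    (hβind : ∀ j : ℤ, Indec D (β j))
    (hβsurj : ∀ x : ℤ × ℤ, Indec D x → ∃ j : ℤ, β j = x)
    (hβmono : StrictMono fun j : ℤ => emb1 D (β j))
    (hβ0 : β 0 = (1, 0))
 :
    ∀ j : ℤ, conjp D (β j) = β (-j) := by
  have hβinj : Function.Injective β := by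
    intro i j hij
    exact hβmono.injective (by simp only [hij])
  choose f hf using fun j => hβsurj (conjp D (β j)) (indec_conjp (hβind j))
  have hanti : StrictAnti f := by
    intro i j hij
    have h1 : emb1 D (β i) < emb1 D (β j) := hβmono hij
    have h2 : emb2 D (β j) < emb2 D (β i) :=
      indec_anti hD2 hsq (hβind i) (hβind j) h1
    have h3 : emb1 D (β (f j)) < emb1 D (β (f i)) := by
      rw [hf, hf, emb1_conjp, emb1_conjp]; exact h2
    exact hβmono.lt_iff_lt.mp h3
  have hinv : ∀ j, f (f j) = j := by
    intro j
    apply hβinj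
    rw [hf, hf, conjp_conjp]
  have h0 : f 0 = 0 := by
    apply hβinj
    rw [hf, hβ0, conjp_one]
  have hneg := anti_inv_neg hanti hinv h0
  intro j
  rw [← hf j, hneg j]
end

section
/- Suppose x = e β_j + f β_{j+1} with 1 ≤ e ≤ v_j - 1, 0 ≤ f ≤ v_{j+1} - 1, and (e,f) ≠ (v_j - 1, v_{j+1} - 1), where v_j are the integers satisfying β_{j-1} + β_{j+1} = v_j β_j. Then x is uniquely decomposable, i.e., x has exactly one representation as a sum of indecomposable elements of O_K^+. -/
open Real Filter

/-! For an additive `φ : ℤ × ℤ →+ ℝ` put `u i = φ (β i)`. The recurrence with `v i ≥ 2` makes `u`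
convex wherever it is nonnegative. For the two real embeddings this means that the outward sums
`u (j - k) + u (j + 1 + k)` grow with `k`; as `β (j - 1) + β (j + 2) - x` is the totally positive
element `(v j - 1 - e) • β j + (v (j + 1) - 1 - f) • β (j + 1)`, no decomposition of `x` contains
both some `β a` with `a < j` and some `β b` with `b > j + 1`.

The coordinate functionals `P`, `Q` of the basis `(β j, β (j + 1))` satisfy the same recurrence.
Convexity makes `P ∘ β` nonnegative up to `j + 1` and at least `v j > e` below `j`, so a summand
below `j` would force `e = P x ≥ v j`; symmetrically `Q` excludes summands above `j + 1`. Only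
`β j` and `β (j + 1)` remain, and `P`, `Q` read off their multiplicities `e` and `f`. -/

def ConvexWhereNonneg (u : ℤ → ℝ) : Prop :=
  ∀ i, 0 ≤ u i → 2 * u i ≤ u (i - 1) + u (i + 1)

lemma convexWhereNonneg_of_eq_mul {u : ℤ → ℝ} {v : ℤ → ℤ} (hv2 : ∀ i, 2 ≤ v i)
    (hu : ∀ i, u (i - 1) + u (i + 1) = v i * u i) : ConvexWhereNonneg u := by
  intro i hi
  have h2 : (2 : ℝ) ≤ v i := by exact_mod_cast hv2 i
  nlinarith [hu i]

namespace ConvexWhereNonneg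

variable {u : ℤ → ℝ}

lemma monotone_sub (hu : ConvexWhereNonneg u) (hpos : ∀ i, 0 ≤ u i) :
    Monotone fun i => u (i + 1) - u i := by
  refine monotone_int_of_le_succ fun i => ?_
  have h := hu (i + 1) (hpos _)
  rw [add_sub_cancel_right] at h
  linarith

lemma monotone_outward_sum (hu : ConvexWhereNonneg u) (hpos : ∀ i, 0 ≤ u i) (j : ℤ) :
    Monotone fun k : ℕ => u (j - k) + u (j + 1 + k) := by
  refine monotone_nat_of_le_succ fun k => ?_
  have h : u (j - k - 1 + 1) - u (j - k - 1) ≤ u (j + 1 + k + 1) - u (j + 1 + k) :=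
    hu.monotone_sub hpos (by omega)
  rw [sub_add_cancel] at h
  simp only [Nat.cast_succ, ← sub_sub, ← add_assoc]
  linarith

lemma antitoneOn_Iic (hu : ConvexWhereNonneg u) {n : ℤ} (h0 : 0 ≤ u (n + 1))
    (h1 : u (n + 1) ≤ u n) : AntitoneOn u (Set.Iic (n + 1)) := by
  have key : ∀ a ≤ n + 1, 0 ≤ u a ∧ u a ≤ u (a - 1) := by
    refine Int.leInductionDown (motive := fun a _ => 0 ≤ u a ∧ u a ≤ u (a - 1))
      ⟨h0, by rwa [add_sub_cancel_right]⟩ fun a _ ⟨ha0, ha1⟩ => ?_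
    have h := hu (a - 1) (ha0.trans ha1)
    rw [sub_add_cancel] at h
    exact ⟨ha0.trans ha1, by linarith⟩
  exact antitoneOn_of_le_sub_one Set.ordConnected_Iic fun a _ ha _ => (key a ha).2

end ConvexWhereNonneg

namespace Multiset

lemma add_le_sum_map_of_ne {ι α : Type*} [AddCommMonoid α] [PartialOrder α]
    [IsOrderedAddMonoid α] {M : Multiset ι} {u : ι → α} (hu : ∀ i ∈ M, 0 ≤ u i) {a b : ι}
    (ha : a ∈ M) (hb : b ∈ M) (hab : a ≠ b) : u a + u b ≤ (M.map u).sum := by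
  obtain ⟨M', rfl⟩ := exists_cons_of_mem ha
  obtain ⟨M'', rfl⟩ := exists_cons_of_mem ((mem_cons.mp hb).resolve_left hab.symm)
  have hrest : 0 ≤ (M''.map u).sum :=
    sum_nonneg fun _ hx => by
      obtain ⟨i, hi, rfl⟩ := mem_map.mp hx
      exact hu i (mem_cons_of_mem (mem_cons_of_mem hi))
  simp only [map_cons, sum_cons, ← add_assoc]
  exact le_add_of_nonneg_right hrest

lemma exists_map_eq_of_forall_exists {ι α : Type*} {f : ι → α} {m : Multiset α}
    (h : ∀ y ∈ m, ∃ i, f i = y) : ∃ M : Multiset ι, M.map f = m := by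
  induction m using Multiset.induction_on with
  | empty => exact ⟨0, rfl⟩
  | cons y m ih =>
    obtain ⟨i, rfl⟩ := h y (mem_cons_self _ _)
    obtain ⟨M, rfl⟩ := ih fun z hz => h z (mem_cons_of_mem hz)
    exact ⟨i ::ₘ M, map_cons _ _ _⟩

lemma exists_eq_replicate_add_replicate {α : Type*} [DecidableEq α] {M : Multiset α}
    {a b : α} (h : ∀ i ∈ M, i = a ∨ i = b) : ∃ c d : ℕ, M = replicate c a + replicate d b := by
  refine ⟨count a M, card (M.filter fun i => ¬ i = a), ?_⟩
  nth_rw 1 [← filter_add_not (· = a) M]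
  rw [filter_eq']
  congr 1
  exact eq_replicate_card.mpr fun i hi =>
    (h i (mem_of_mem_filter hi)).resolve_left (mem_filter.mp hi).2

end Multiset

lemma AddMonoidHom.exists_eq_one_eq_zero {G K : Type*} [AddCommGroup G] [Field K]
    (φ₁ φ₂ : G →+ K) {x y : G} (h : φ₁ x * φ₂ y ≠ φ₂ x * φ₁ y) :
    ∃ P : G →+ K, P x = 1 ∧ P y = 0 := by
  refine ⟨(φ₁ x * φ₂ y - φ₂ x * φ₁ y)⁻¹ • (φ₂ y • φ₁ - φ₁ y • φ₂), ?_, ?_⟩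
  · have : φ₁ x * φ₂ y - φ₂ x * φ₁ y ≠ 0 := sub_ne_zero.mpr h
    simp only [AddMonoidHom.smul_apply, AddMonoidHom.sub_apply, smul_eq_mul]
    field_simp
  · simp only [AddMonoidHom.smul_apply, AddMonoidHom.sub_apply, smul_eq_mul]
    ring

section IndecomposableChain

variable {G : Type*} [AddCommGroup G] {β : ℤ → G} {v : ℤ → ℤ}

lemma map_add_map_eq_mul (φ : G →+ ℝ) (hv : ∀ i, β (i - 1) + β (i + 1) = v i • β i) (i : ℤ) :
    φ (β (i - 1)) + φ (β (i + 1)) = v i * φ (β i) := by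
  simpa [zsmul_eq_mul] using congrArg φ (hv i)

lemma convexWhereNonneg_map (φ : G →+ ℝ) (hv2 : ∀ i, 2 ≤ v i)
    (hv : ∀ i, β (i - 1) + β (i + 1) = v i • β i) : ConvexWhereNonneg fun i => φ (β i) :=
  convexWhereNonneg_of_eq_mul hv2 (map_add_map_eq_mul φ hv)

lemma map_lt_map_add_map (φ : G →+ ℝ) (hpos : ∀ i, 0 < φ (β i)) (hv2 : ∀ i, 2 ≤ v i)
    (hv : ∀ i, β (i - 1) + β (i + 1) = v i • β i) {j e f : ℤ} (he : e ≤ v j - 1)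
    (hf : f ≤ v (j + 1) - 1) (hef : (e, f) ≠ (v j - 1, v (j + 1) - 1)) {k : ℕ} (hk : 1 ≤ k) :
    φ (e • β j + f • β (j + 1)) < φ (β (j - k)) + φ (β (j + 1 + k)) := by
  have hbase : φ (e • β j + f • β (j + 1)) < φ (β (j - 1)) + φ (β (j + 1 + 1)) := by
    have h₀ := map_add_map_eq_mul φ hv j
    have h₁ := map_add_map_eq_mul φ hv (j + 1)
    rw [add_sub_cancel_right] at h₁
    have he' : (e : ℝ) ≤ v j - 1 := by exact_mod_cast he
    have hf' : (f : ℝ) ≤ v (j + 1) - 1 := by exact_mod_cast hf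
    have hj := hpos j
    have hj1 := hpos (j + 1)
    rw [map_add, map_zsmul, map_zsmul, zsmul_eq_mul, zsmul_eq_mul]
    have hlt : e < v j - 1 ∨ f < v (j + 1) - 1 := by
      simp only [ne_eq, Prod.mk.injEq] at hef
      omega
    rcases hlt with hlt | hlt
    · have hlt' : (e : ℝ) < v j - 1 := by exact_mod_cast hlt
      linarith [mul_lt_mul_of_pos_right hlt' hj, mul_le_mul_of_nonneg_right hf' hj1.le]
    · have hlt' : (f : ℝ) < v (j + 1) - 1 := by exact_mod_cast hlt
      linarith [mul_le_mul_of_nonneg_right he' hj.le, mul_lt_mul_of_pos_right hlt' hj1]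
  have hmono := (convexWhereNonneg_map φ hv2 hv).monotone_outward_sum (fun i => (hpos i).le) j hk
  simp only [Nat.cast_one] at hmono
  linarith

lemma le_add_one_of_mem_of_le_sub_one (hv2 : ∀ i, 2 ≤ v i)
    (hv : ∀ i, β (i - 1) + β (i + 1) = v i • β i) (φ₁ φ₂ : G →+ ℝ)
    (h₁pos : ∀ i, 0 < φ₁ (β i)) (h₂pos : ∀ i, 0 < φ₂ (β i))
    (h₁ : Monotone fun i => φ₁ (β i)) (h₂ : Antitone fun i => φ₂ (β i)) {j e f : ℤ}
    (he : e ≤ v j - 1) (hf : f ≤ v (j + 1) - 1) (hef : (e, f) ≠ (v j - 1, v (j + 1) - 1))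
    {M : Multiset ℤ} (hM : (M.map β).sum = e • β j + f • β (j + 1)) {a b : ℤ} (ha : a ∈ M)
    (hb : b ∈ M) (haj : a ≤ j - 1) : b ≤ j + 1 := by
  by_contra! hbj
  have hpair (φ : G →+ ℝ) (hpos : ∀ i, 0 < φ (β i)) :
      φ (β a) + φ (β b) ≤ φ (e • β j + f • β (j + 1)) := by
    rw [← hM, map_multiset_sum, Multiset.map_map]
    exact Multiset.add_le_sum_map_of_ne (fun i _ => (hpos i).le) ha hb (by omega)
  rcases le_total (j - a) (b - (j + 1)) with hk | hk
  · obtain ⟨k, hk⟩ : ∃ k : ℕ, (k : ℤ) = b - (j + 1) := ⟨(b - (j + 1)).toNat, by omega⟩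
    have hlt := map_lt_map_add_map φ₁ h₁pos hv2 hv he hf hef (k := k) (by omega)
    have hle := h₁ (show j - k ≤ a by omega)
    rw [show j + 1 + (k : ℤ) = b by omega] at hlt
    linarith [hpair φ₁ h₁pos]
  · obtain ⟨k, hk⟩ : ∃ k : ℕ, (k : ℤ) = j - a := ⟨(j - a).toNat, by omega⟩
    have hlt := map_lt_map_add_map φ₂ h₂pos hv2 hv he hf hef (k := k) (by omega)
    have hle := h₂ (show b ≤ j + 1 + k by omega)
    rw [show j - (k : ℤ) = a by omega] at hlt
    linarith [hpair φ₂ h₂pos]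

lemma forall_le_of_forall_le_add_one (hv2 : ∀ i, 2 ≤ v i)
    (hv : ∀ i, β (i - 1) + β (i + 1) = v i • β i) (P : G →+ ℝ) {j e f : ℤ}
    (hPj : P (β j) = 1) (hPj1 : P (β (j + 1)) = 0) (he : e < v j) {M : Multiset ℤ}
    (hM : (M.map β).sum = e • β j + f • β (j + 1)) (hle : ∀ i ∈ M, i ≤ j + 1) :
    ∀ i ∈ M, j ≤ i := by
  intro a ha
  by_contra! haj
  set u := fun i => P (β i)
  have hanti : AntitoneOn u (Set.Iic (j + 1)) :=
    (convexWhereNonneg_map P hv2 hv).antitoneOn_Iic (by simp [hPj1]) (by simp [hPj, hPj1])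
  have hjm1 : u (j - 1) = v j := by simpa [hPj, hPj1] using map_add_map_eq_mul P hv j
  have hsum : (M.map u).sum = e := by
    have := congrArg P hM
    rw [map_multiset_sum, Multiset.map_map] at this
    simpa [hPj, hPj1] using this
  have hnonneg : ∀ x ∈ M.map u, 0 ≤ x := by
    intro x hx
    obtain ⟨i, hi, rfl⟩ := Multiset.mem_map.mp hx
    rw [← hPj1]
    exact hanti (hle i hi) (Set.mem_Iic.mpr le_rfl) (hle i hi)
  have hua := Multiset.single_le_sum hnonneg (u a) (Multiset.mem_map_of_mem u ha)
  have hva : u (j - 1) ≤ u a := hanti (hle a ha) (Set.mem_Iic.mpr (by omega)) (by omega)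
  have he' : (e : ℝ) < v j := by exact_mod_cast he
  linarith

lemma forall_le_add_one_of_forall_le (hv2 : ∀ i, 2 ≤ v i)
    (hv : ∀ i, β (i - 1) + β (i + 1) = v i • β i) (Q : G →+ ℝ) {j e f : ℤ}
    (hQj : Q (β j) = 0) (hQj1 : Q (β (j + 1)) = 1) (hf : f < v (j + 1)) {M : Multiset ℤ}
    (hM : (M.map β).sum = e • β j + f • β (j + 1)) (hge : ∀ i ∈ M, j ≤ i) :
    ∀ i ∈ M, i ≤ j + 1 := by
  have hmirror := forall_le_of_forall_le_add_one (β := fun i => β (-i)) (v := fun i => v (-i))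
    (j := -(j + 1)) (e := f) (f := e) (M := M.map Neg.neg) (fun i => hv2 (-i))
    (fun i => by rw [neg_sub', sub_neg_eq_add, add_comm, neg_add']; exact hv (-i)) Q
    (by simpa using hQj1) (by simpa [show -(-(j + 1) + 1) = j by ring] using hQj)
    (by simpa using hf)
    (by simpa [Multiset.map_map, Function.comp_def, add_comm] using hM)
    (by simpa using fun i hi => neg_le_neg (hge i hi))
  intro i hi
  have := hmirror (-i) (Multiset.mem_map_of_mem _ hi)
  omega

theorem sum_map_eq_iff_eq_replicate (hv2 : ∀ i, 2 ≤ v i)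
    (hv : ∀ i, β (i - 1) + β (i + 1) = v i • β i) (φ₁ φ₂ : G →+ ℝ)
    (h₁pos : ∀ i, 0 < φ₁ (β i)) (h₂pos : ∀ i, 0 < φ₂ (β i))
    (h₁ : StrictMono fun i => φ₁ (β i)) (h₂ : Antitone fun i => φ₂ (β i)) {j e f : ℤ}
    (he : 0 ≤ e) (he' : e ≤ v j - 1) (hf : 0 ≤ f) (hf' : f ≤ v (j + 1) - 1)
    (hef : (e, f) ≠ (v j - 1, v (j + 1) - 1)) (M : Multiset ℤ) :
    (M.map β).sum = e • β j + f • β (j + 1) ↔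
      M = Multiset.replicate e.toNat j + Multiset.replicate f.toNat (j + 1) := by
  have hsum (c d : ℕ) : ((Multiset.replicate c j + Multiset.replicate d (j + 1)).map β).sum =
      (c : ℤ) • β j + (d : ℤ) • β (j + 1) := by
    simp [Multiset.sum_replicate, natCast_zsmul]
  refine ⟨fun hM => ?_, fun hM => by
    rw [hM, hsum, Int.toNat_of_nonneg he, Int.toNat_of_nonneg hf]⟩
  have hΔ : φ₁ (β j) * φ₂ (β (j + 1)) < φ₂ (β j) * φ₁ (β (j + 1)) := by
    have h₁j := h₁ (lt_add_one j)
    have h₂j := h₂ (le_of_lt (lt_add_one j))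
    nlinarith [h₁pos j, h₂pos j, h₂pos (j + 1)]
  obtain ⟨P, hPj, hPj1⟩ := AddMonoidHom.exists_eq_one_eq_zero φ₁ φ₂ hΔ.ne
  obtain ⟨Q, hQj1, hQj⟩ := AddMonoidHom.exists_eq_one_eq_zero φ₁ φ₂ (x := β (j + 1)) (y := β j)
    (ne_of_gt (by linarith))
  have hge : ∀ i ∈ M, j ≤ i := by
    by_contra! ⟨a, ha, haj⟩
    have hle : ∀ b ∈ M, b ≤ j + 1 := fun b hb =>
      le_add_one_of_mem_of_le_sub_one hv2 hv φ₁ φ₂ h₁pos h₂pos h₁.monotone h₂ he' hf' hef hM ha hb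
        (by omega)
    exact (forall_le_of_forall_le_add_one hv2 hv P hPj hPj1 (by omega) hM hle a ha).not_gt haj
  have hle := forall_le_add_one_of_forall_le hv2 hv Q hQj hQj1 (by omega) hM hge
  obtain ⟨c, d, rfl⟩ := Multiset.exists_eq_replicate_add_replicate (a := j) (b := j + 1)
    fun i hi => by have := hge i hi; have := hle i hi; omega
  rw [hsum] at hM
  have hc : ((c : ℤ) : ℝ) = e := by simpa [hPj, hPj1] using congrArg P hM
  have hd : ((d : ℤ) : ℝ) = f := by simpa [hQj, hQj1] using congrArg Q hM
  have hc' : (c : ℤ) = e := by exact_mod_cast hc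
  have hd' : (d : ℤ) = f := by exact_mod_cast hd
  rw [show c = e.toNat by omega, show d = f.toNat by omega]

end IndecomposableChain

noncomputable def emb1Hom (D : ℕ) : ℤ × ℤ →+ ℝ :=
  AddMonoidHom.mk' (emb1 D) fun x y => by
    simp only [emb1, Prod.fst_add, Prod.snd_add]
    push_cast
    ring

noncomputable def emb2Hom (D : ℕ) : ℤ × ℤ →+ ℝ :=
  AddMonoidHom.mk' (emb2 D) fun x y => by
    simp only [emb2, Prod.fst_add, Prod.snd_add]
    push_cast
    ring

lemma antitone_emb2_of_indec {D : ℕ} {β : ℤ → ℤ × ℤ} (hβind : ∀ j, Indec D (β j))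
    (hβmono : StrictMono fun j => emb1 D (β j)) : Antitone fun j => emb2 D (β j) := by
  refine antitone_int_of_succ_le fun i => ?_
  by_contra! h
  have h₁ : 0 < emb1Hom D (β (i + 1) - β i) := by
    rw [map_sub]
    exact sub_pos.mpr (hβmono (lt_add_one i))
  have h₂ : 0 < emb2Hom D (β (i + 1) - β i) := by
    rw [map_sub]
    exact sub_pos.mpr h
  exact (hβind (i + 1)).2 ⟨β i, β (i + 1) - β i, (hβind i).1, ⟨h₁, h₂⟩, by abel⟩

theorem stmt10_general (D : ℕ)
    (β : ℤ → ℤ × ℤ)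
    (hβind : ∀ j : ℤ, Indec D (β j))
    (hβsurj : ∀ x : ℤ × ℤ, Indec D x → ∃ j : ℤ, β j = x)
    (hβmono : StrictMono fun j : ℤ => emb1 D (β j))
    (v : ℤ → ℤ) (hv2 : ∀ j : ℤ, 2 ≤ v j)
    (hv : ∀ j : ℤ, β (j - 1) + β (j + 1) = v j • β j)
    (x : ℤ × ℤ) (j e f : ℤ)
    (hx : x = e • β j + f • β (j + 1))
    (he : 1 ≤ e) (he' : e ≤ v j - 1)
    (hf : 0 ≤ f) (hf' : f ≤ v (j + 1) - 1)
    (hef : (e, f) ≠ (v j - 1, v (j + 1) - 1)) :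
    UniqDec D x := by
  have hchar := sum_map_eq_iff_eq_replicate hv2 hv (emb1Hom D) (emb2Hom D)
    (fun i => (hβind i).1.1) (fun i => (hβind i).1.2) hβmono (antitone_emb2_of_indec hβind hβmono)
    (by omega) he' hf hf' hef
  refine ⟨(Multiset.replicate e.toNat j + Multiset.replicate f.toNat (j + 1)).map β,
    ⟨?_, by rw [hx, hchar]⟩, ?_⟩
  · simp only [Multiset.mem_map]
    rintro _ ⟨i, -, rfl⟩
    exact hβind i
  · rintro m ⟨hm, hsum⟩
    obtain ⟨M, rfl⟩ := Multiset.exists_map_eq_of_forall_exists fun y hy => hβsurj y (hm y hy)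
    rw [← (hchar M).mp (hsum.trans hx)]

theorem stmt10 (D : ℕ)
    (hD2 : 2 ≤ D) (hsq : Squarefree D)
    (β : ℤ → ℤ × ℤ)
    (hβind : ∀ j : ℤ, Indec D (β j))
    (hβsurj : ∀ x : ℤ × ℤ, Indec D x → ∃ j : ℤ, β j = x)
    (hβmono : StrictMono fun j : ℤ => emb1 D (β j))
    (hβ0 : β 0 = (1, 0))
    (v : ℤ → ℤ) (hv2 : ∀ j : ℤ, 2 ≤ v j)
    (hv : ∀ j : ℤ, β (j - 1) + β (j + 1) = v j • β j)
    (x : ℤ × ℤ) (j e f : ℤ)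
    (hx : x = e • β j + f • β (j + 1))
    (he : 1 ≤ e) (he' : e ≤ v j - 1)
    (hf : 0 ≤ f) (hf' : f ≤ v (j + 1) - 1)
    (hef : (e, f) ≠ (v j - 1, v (j + 1) - 1)) :
    UniqDec D x :=
  stmt10_general D β hβind hβsurj hβmono v hv2 hv x j e f hx he he' hf hf' hef
end

section
/- If x = e β_j + f β_{j+1} with e ≥ v_j (where β_{j-1} + β_{j+1} = v_j β_j), then x admits at least two distinct decompositions into indecomposables; namely x = e β_j + f β_{j+1} = β_{j-1} + (e - v_j) β_j + (f+1) β_{j+1}. In particular x is not uniquely decomposable. -/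
open Real Filter

theorem stmt11 (D : ℕ)
    (hD2 : 2 ≤ D) (hsq : Squarefree D)
    (β : ℤ → ℤ × ℤ)
    (hβind : ∀ j : ℤ, Indec D (β j))
    (hβsurj : ∀ x : ℤ × ℤ, Indec D x → ∃ j : ℤ, β j = x)
    (hβmono : StrictMono fun j : ℤ => emb1 D (β j))
    (hβ0 : β 0 = (1, 0))
    (v : ℤ → ℤ) (hv2 : ∀ j : ℤ, 2 ≤ v j)
    (hv : ∀ j : ℤ, β (j - 1) + β (j + 1) = v j • β j)
    (x : ℤ × ℤ) (j e f : ℤ)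
    (hx : x = e • β j + f • β (j + 1))
    (he : v j ≤ e) (hf : 0 ≤ f) :
    x = β (j - 1) + (e - v j) • β j + (f + 1) • β (j + 1) ∧ ¬ UniqDec D x := by
  have heq : x = β (j - 1) + (e - v j) • β j + (f + 1) • β (j + 1) := by
    rw [hx, sub_smul, add_smul, one_smul, ← hv j]
    abel
  refine ⟨heq, ?_⟩
  have hinj : Function.Injective β := fun a b h => hβmono.injective (by simp only [h])
  have hne1 : β (j - 1) ≠ β (j + 1) := fun h => by have := hinj h; omega
  have hne2 : β j ≠ β (j + 1) := fun h => by have := hinj h; omega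
  have he0 : (0:ℤ) ≤ e := le_trans (by linarith [hv2 j]) he
  set m1 : Multiset (ℤ × ℤ) :=
    Multiset.replicate e.toNat (β j) + Multiset.replicate f.toNat (β (j + 1)) with hm1
  set m2 : Multiset (ℤ × ℤ) :=
    (β (j - 1)) ::ₘ (Multiset.replicate (e - v j).toNat (β j) +
      Multiset.replicate (f + 1).toNat (β (j + 1))) with hm2
  have hsum1 : m1.sum = x := by
    rw [hm1, Multiset.sum_add, Multiset.sum_replicate, Multiset.sum_replicate, hx]
    simp only [← natCast_zsmul]
    rw [Int.toNat_of_nonneg he0, Int.toNat_of_nonneg hf]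
  have hsum2 : m2.sum = x := by
    rw [hm2, Multiset.sum_cons, Multiset.sum_add, Multiset.sum_replicate,
      Multiset.sum_replicate, heq]
    simp only [← natCast_zsmul]
    rw [Int.toNat_of_nonneg (by omega : (0:ℤ) ≤ e - v j),
      Int.toNat_of_nonneg (by omega : (0:ℤ) ≤ f + 1)]
    abel
  have hind1 : ∀ y ∈ m1, Indec D y := by
    intro y hy
    rw [hm1, Multiset.mem_add] at hy
    rcases hy with h | h <;> rw [Multiset.eq_of_mem_replicate h] <;> exact hβind _
  have hind2 : ∀ y ∈ m2, Indec D y := by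
    intro y hy
    rw [hm2, Multiset.mem_cons, Multiset.mem_add] at hy
    rcases hy with h | h | h
    · rw [h]; exact hβind _
    · rw [Multiset.eq_of_mem_replicate h]; exact hβind _
    · rw [Multiset.eq_of_mem_replicate h]; exact hβind _
  have hcount1 : m1.count (β (j + 1)) = f.toNat := by
    rw [hm1, Multiset.count_add, Multiset.count_replicate, Multiset.count_replicate,
      if_neg hne2, if_pos rfl, Nat.zero_add]
  have hcount2 : m2.count (β (j + 1)) = (f + 1).toNat := by
    rw [hm2, Multiset.count_cons_of_ne (Ne.symm hne1), Multiset.count_add,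
      Multiset.count_replicate, Multiset.count_replicate,
      if_neg hne2, if_pos rfl, Nat.zero_add]
  have hne : m1 ≠ m2 := fun h => by
    rw [h, hcount2] at hcount1; omega
  rintro ⟨m, -, hu⟩
  exact hne ((hu m1 ⟨hind1, hsum1⟩).trans (hu m2 ⟨hind2, hsum2⟩).symm)
end

section
/- If x = (v_j - 1) β_j + (v_{j+1} - 1) β_{j+1}, then also x = β_{j-1} + β_{j+2}; in particular this x is not uniquely decomposable. -/
open Real Filter

theorem stmt12 (D : ℕ)
    (hD2 : 2 ≤ D) (hsq : Squarefree D)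
    (β : ℤ → ℤ × ℤ)
    (hβind : ∀ j : ℤ, Indec D (β j))
    (hβsurj : ∀ x : ℤ × ℤ, Indec D x → ∃ j : ℤ, β j = x)
    (hβmono : StrictMono fun j : ℤ => emb1 D (β j))
    (hβ0 : β 0 = (1, 0))
    (v : ℤ → ℤ) (hv2 : ∀ j : ℤ, 2 ≤ v j)
    (hv : ∀ j : ℤ, β (j - 1) + β (j + 1) = v j • β j)
    (x : ℤ × ℤ) (j : ℤ)
    (hx : x = (v j - 1) • β j + (v (j + 1) - 1) • β (j + 1)) :
    x = β (j - 1) + β (j + 2) ∧ ¬ UniqDec D x := by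
  have hβinj : Function.Injective β := by
    intro a b h
    exact hβmono.injective (by simp [h])
  have h1 := hv j
  have h2 := hv (j + 1)
  have e1 : j + 1 - 1 = j := by ring
  have e2 : j + 1 + 1 = j + 2 := by ring
  rw [e1, e2] at h2
  have hmain : x = β (j - 1) + β (j + 2) := by
    rw [hx, sub_smul, sub_smul, one_smul, one_smul, ← h1, ← h2]
    abel
  refine ⟨hmain, ?_⟩
  rintro ⟨m, hm, huniq⟩
  set m1 : Multiset (ℤ × ℤ) := {β (j - 1), β (j + 2)} with hm1def
  set m2 : Multiset (ℤ × ℤ) :=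
    Multiset.replicate (v j - 1).toNat (β j) +
      Multiset.replicate (v (j + 1) - 1).toNat (β (j + 1)) with hm2def
  have hne : m1 ≠ m2 := by
    intro h
    have hmem : β (j - 1) ∈ m2 := by
      rw [← h]
      simp [hm1def]
    rw [hm2def, Multiset.mem_add, Multiset.mem_replicate, Multiset.mem_replicate] at hmem
    rcases hmem with ⟨_, hq⟩ | ⟨_, hq⟩
    · have := hβinj hq; omega
    · have := hβinj hq; omega
  have hsm1 : m1 = m := by
    apply huniq
    constructor
    · intro y hy
      simp only [hm1def, Multiset.insert_eq_cons, Multiset.mem_cons,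
        Multiset.mem_singleton] at hy
      rcases hy with h | h <;> rw [h] <;> exact hβind _
    · simp [hm1def, hmain]
  have hsm2 : m2 = m := by
    apply huniq
    constructor
    · intro y hy
      rw [hm2def, Multiset.mem_add, Multiset.mem_replicate, Multiset.mem_replicate] at hy
      rcases hy with ⟨_, hq⟩ | ⟨_, hq⟩ <;> rw [hq] <;> exact hβind _
    · have t1 : ((v j - 1).toNat : ℤ) = v j - 1 := Int.toNat_of_nonneg (by have := hv2 j; omega)
      have t2 : ((v (j + 1) - 1).toNat : ℤ) = v (j + 1) - 1 :=
        Int.toNat_of_nonneg (by have := hv2 (j + 1); omega)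
      rw [hm2def, Multiset.sum_add, Multiset.sum_replicate, Multiset.sum_replicate, hx,
        ← natCast_zsmul (β j), ← natCast_zsmul (β (j + 1)), t1, t2]
  exact hne (hsm1.trans hsm2.symm)
end
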